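/- arXiv:2412.03305 — 7 statements merged into one kernel-verified Lean document; each statement's English description precedes it below -/
import Mathlib

section
/- Let V be a real inner product space of dimension at least 2 and let f : V → ℝ be absolutely homogeneous of degree 1 (f(λv) = |λ| f(v) for all λ ∈ ℝ, v ∈ V). If there exists a function F : ℝ × ℝ × ℝ × ℝ × ℝ → ℝ such that f(u + v) = F(⟨u,u⟩, ⟨u,v⟩, ⟨v,v⟩, f(u), f(v)) for all u, v ∈ V, then there exists a constant c ∈ ℝ such that f(v) = c·‖v‖ for all v ∈ V. -/
open scoped RealInnerProductSpace

theorem stmt0 {V : Type*} [NormedAddCommGroup V] [InnerProductSpace ℝ V]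
    (hdim : 2 ≤ Module.rank ℝ V) (f : V → ℝ)
    (hhom : ∀ (l : ℝ) (v : V), f (l • v) = |l| * f v)
    (F : ℝ → ℝ → ℝ → ℝ → ℝ → ℝ)
    (hF : ∀ u v : V, f (u + v) = F ⟪u, u⟫ ⟪u, v⟫ ⟪v, v⟫ (f u) (f v)) :
    ∃ c : ℝ, ∀ v : V, f v = c * ‖v‖ := by
  -- f is even
  have hneg : ∀ v : V, f (-v) = f v := by
    intro v
    have := hhom (-1) v
    simpa using this
  -- key: if u ⟂ v then f (u+v) = f (u-v)
  have hrefl : ∀ u v : V, ⟪u, v⟫ = 0 → f (u + v) = f (u - v) := by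
    intro u v huv
    have h1 := hF u v
    have h2 := hF u (-v)
    rw [inner_neg_right, inner_neg_neg, huv, neg_zero, hneg] at h2
    rw [h1, huv, sub_eq_add_neg]
    exact h2.symm
  -- f depends only on the norm
  have hnorm : ∀ x y : V, ‖x‖ = ‖y‖ → f x = f y := by
    intro x y hxy
    set u := (2⁻¹ : ℝ) • (x + y) with hu
    set v := (2⁻¹ : ℝ) • (x - y) with hv
    have huv : ⟪u, v⟫ = 0 := by
      have : ⟪x + y, x - y⟫ = 0 := by
        rw [inner_sub_right, inner_add_left, inner_add_left,
          real_inner_comm y x, real_inner_self_eq_norm_sq, real_inner_self_eq_norm_sq, hxy]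
        ring
      rw [hu, hv, real_inner_smul_left, real_inner_smul_right, this]
      ring
    have hx : u + v = x := by
      rw [hu, hv, ← smul_add]
      rw [show x + y + (x - y) = (2 : ℝ) • x by rw [two_smul]; abel]
      rw [smul_smul]; norm_num
    have hy : u - v = y := by
      rw [hu, hv, ← smul_sub]
      rw [show x + y - (x - y) = (2 : ℝ) • y by rw [two_smul]; abel]
      rw [smul_smul]; norm_num
    rw [← hx, ← hy]
    exact hrefl u v huv
  -- pick a unit vector
  obtain ⟨e, he⟩ : ∃ e : V, e ≠ 0 := by
    rw [← rank_pos_iff_exists_ne_zero (R := ℝ)]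
    exact lt_of_lt_of_le (by norm_num) hdim
  set e' : V := ‖e‖⁻¹ • e with he'
  have hne : ‖e'‖ = 1 := by
    rw [he', norm_smul, norm_inv, norm_norm]
    field_simp
  refine ⟨f e', fun v => ?_⟩
  have h1 : f v = f (‖v‖ • e') := by
    apply hnorm
    rw [norm_smul, hne, Real.norm_eq_abs, abs_norm, mul_one]
  rw [h1, hhom, abs_norm, mul_comm]
end

section
/- Let V be a real inner product space of dimension at least 2, and let f : V → ℝ be absolutely homogeneous of degree 1 and not identically zero. Then there exist u, v ∈ V, both nonzero, such that f(u + v) ≠ ((1 + ρ)/2)·(f(u) + f(v)) + ((1 − ρ)/2)·|f(u) − f(v)|, where ρ = ⟨u,v⟩/(‖u‖·‖v‖). -/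
/-!
Suppose the formula held. For orthogonal `u, v` it says `f (u + v) = max (f u) (f v)`.
Take `w ≠ 0` and `b ⊥ w` with `‖b‖ = ‖w‖`; then `w + b ⊥ w - b`, and since `f` is even,
`f (2 • w) = f ((w + b) + (w - b)) = max (f w) (f b)` and likewise `f (2 • b) = max (f w) (f b)`.
Hence `2 f w = 2 f b = max (f w) (f b)`, which forces `f w = 0`.
-/

open scoped RealInnerProductSpace

section

variable {V : Type*} [NormedAddCommGroup V] [InnerProductSpace ℝ V]

lemma add_ne_zero_of_inner_eq_zero {x y : V} (hx : x ≠ 0) (h : ⟪x, y⟫ = 0) : x + y ≠ 0 := by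
  intro hxy
  rw [eq_neg_of_add_eq_zero_right hxy, inner_neg_right, neg_eq_zero,
    inner_self_eq_zero] at h
  exact hx h

lemma sub_ne_zero_of_inner_eq_zero {x y : V} (hx : x ≠ 0) (h : ⟪x, y⟫ = 0) : x - y ≠ 0 := by
  rw [sub_eq_add_neg]
  exact add_ne_zero_of_inner_eq_zero hx (by rw [inner_neg_right, h, neg_zero])

lemma exists_inner_eq_zero_norm_eq (hdim : 2 ≤ Module.rank ℝ V) (w : V) :
    ∃ b : V, ⟪w, b⟫ = 0 ∧ ‖b‖ = ‖w‖ := by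
  have hline : (ℝ ∙ w) ≠ ⊤ := by
    intro htop
    have hle : Module.rank ℝ (ℝ ∙ w) ≤ 1 := by
      simpa using rank_span_le (R := ℝ) ({w} : Set V)
    rw [htop, rank_top] at hle
    exact absurd (hdim.trans hle) (by norm_num)
  obtain ⟨v, hv, hv0⟩ :=
    (Submodule.ne_bot_iff _).mp (mt Submodule.orthogonal_eq_bot_iff.mp hline)
  have hwv : ⟪w, v⟫ = 0 :=
    (Submodule.mem_orthogonal_singleton_iff_inner_right).mp hv
  refine ⟨(‖w‖ / ‖v‖) • v, by rw [real_inner_smul_right, hwv, mul_zero], ?_⟩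
  have hvn : 0 < ‖v‖ := norm_pos_iff.mpr hv0
  rw [norm_smul, Real.norm_of_nonneg (by positivity), div_mul_cancel₀ _ hvn.ne']

theorem eq_zero_of_map_add_eq_max (hdim : 2 ≤ Module.rank ℝ V) {f : V → ℝ}
    (heven : ∀ x, f (-x) = f x) (htwo : ∀ x, f ((2 : ℝ) • x) = 2 * f x)
    (hmax : ∀ u v : V, u ≠ 0 → v ≠ 0 → ⟪u, v⟫ = 0 → f (u + v) = max (f u) (f v)) :
    f = 0 := by
  funext w
  rcases eq_or_ne w 0 with rfl | hw
  · have h0 := htwo 0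
    rw [smul_zero] at h0
    simp only [Pi.zero_apply]
    linarith
  obtain ⟨b, hwb, hbw⟩ := exists_inner_eq_zero_norm_eq hdim w
  have hb : b ≠ 0 := norm_ne_zero_iff.mp (hbw ▸ norm_ne_zero_iff.mpr hw)
  have hsum : f (w + b) = max (f w) (f b) := hmax w b hw hb hwb
  have hdiff : f (w - b) = max (f w) (f b) := by
    rw [sub_eq_add_neg, hmax w (-b) hw (neg_ne_zero.mpr hb) (by rw [inner_neg_right, hwb,
      neg_zero]), heven]
  have hperp : ⟪w + b, w - b⟫ = 0 := (real_inner_add_sub_eq_zero_iff w b).mpr hbw.symm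
  have hpb := add_ne_zero_of_inner_eq_zero hw hwb
  have hmb := sub_ne_zero_of_inner_eq_zero hw hwb
  have h2w : 2 * f w = max (f w) (f b) := by
    rw [← htwo, show (2 : ℝ) • w = (w + b) + (w - b) by module,
      hmax _ _ hpb hmb hperp, hsum, hdiff, max_self]
  have h2b : 2 * f b = max (f w) (f b) := by
    rw [← htwo, show (2 : ℝ) • b = (w + b) + -(w - b) by module,
      hmax _ _ hpb (neg_ne_zero.mpr hmb) (by rw [inner_neg_right, hperp, neg_zero]),
      heven, hsum, hdiff, max_self]
  rcases max_cases (f w) (f b) with ⟨h, _⟩ | ⟨h, _⟩ <;> simp only [Pi.zero_apply] <;> linarith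

end

theorem stmt2 {V : Type*} [NormedAddCommGroup V] [InnerProductSpace ℝ V]
    (hdim : 2 ≤ Module.rank ℝ V) (f : V → ℝ)
    (hhom : ∀ (l : ℝ) (v : V), f (l • v) = |l| * f v)
    (hne : f ≠ 0) :
    ∃ u v : V, u ≠ 0 ∧ v ≠ 0 ∧
      f (u + v) ≠ (1 + ⟪u, v⟫ / (‖u‖ * ‖v‖)) / 2 * (f u + f v)
        + (1 - ⟪u, v⟫ / (‖u‖ * ‖v‖)) / 2 * |f u - f v| := by
  by_contra! hformula
  refine hne (eq_zero_of_map_add_eq_max hdim (fun x => ?_) (fun x => ?_) fun u v hu hv h => ?_)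
  · simpa using hhom (-1) x
  · simpa using hhom 2 x
  · rw [hformula u v hu hv, h, zero_div]
    linarith [max_sub_min_eq_abs' (f u) (f v), min_add_max (f u) (f v)]
end

section
/- Let f : V → ℝ be absolutely homogeneous of degree 1 on a real inner product space V, and suppose f(u + v) = ((1+ρ(u,v))/2)(f(u)+f(v)) + ((1−ρ(u,v))/2)|f(u)−f(v)| holds for all nonzero u, v ∈ V, where ρ(u,v) = ⟨u,v⟩/(‖u‖‖v‖). If e₁, e₂ ∈ V are orthonormal, then f(e₁ + e₂) = f(e₁ − e₂) = max(f(e₁), f(e₂)), and consequently f(e₁) = f(e₂) = 0. -/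
open scoped RealInnerProductSpace

theorem stmt3 {V : Type*} [NormedAddCommGroup V] [InnerProductSpace ℝ V]
    (f : V → ℝ)
    (hhom : ∀ (l : ℝ) (v : V), f (l • v) = |l| * f v)
    (hKL : ∀ u v : V, u ≠ 0 → v ≠ 0 →
      f (u + v) = (1 + ⟪u, v⟫ / (‖u‖ * ‖v‖)) / 2 * (f u + f v)
        + (1 - ⟪u, v⟫ / (‖u‖ * ‖v‖)) / 2 * |f u - f v|)
    (e₁ e₂ : V) (he₁ : ‖e₁‖ = 1) (he₂ : ‖e₂‖ = 1) (horth : ⟪e₁, e₂⟫ = 0) :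
    f (e₁ + e₂) = f (e₁ - e₂) ∧ f (e₁ + e₂) = max (f e₁) (f e₂) ∧
      f e₁ = 0 ∧ f e₂ = 0 := by
  have h1 : e₁ ≠ 0 := fun h => by simp [h] at he₁
  have h2 : e₂ ≠ 0 := fun h => by simp [h] at he₂
  have hn2 : f (-e₂) = f e₂ := by
    have := hhom (-1) e₂; simpa using this
  have hn1 : f (-e₁) = f e₁ := by
    have := hhom (-1) e₁; simpa using this
  have horth' : ⟪e₂, e₁⟫ = 0 := by rwa [real_inner_comm]
  have hmax : ∀ a b : ℝ, (1 + (0:ℝ)) / 2 * (a + b) + (1 - (0:ℝ)) / 2 * |a - b| = max a b := by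
    intro a b
    rcases le_total a b with h | h
    · rw [abs_of_nonpos (by linarith), max_eq_right h]; ring
    · rw [abs_of_nonneg (by linarith), max_eq_left h]; ring
  have hp : f (e₁ + e₂) = max (f e₁) (f e₂) := by
    have := hKL e₁ e₂ h1 h2
    rw [horth, zero_div] at this
    rw [this, hmax]
  have hm : f (e₁ - e₂) = max (f e₁) (f e₂) := by
    have := hKL e₁ (-e₂) h1 (neg_ne_zero.mpr h2)
    rw [inner_neg_right, horth, neg_zero, zero_div, hn2] at this
    rw [sub_eq_add_neg, this, hmax]
  -- e₁ + e₂ and e₁ - e₂ nonzero, orthogonal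
  have hpn : e₁ + e₂ ≠ 0 := by
    intro h
    have : ⟪e₁ + e₂, e₁ + e₂⟫ = 0 := by rw [h]; simp
    rw [inner_add_add_self, horth, real_inner_self_eq_norm_sq,
      real_inner_self_eq_norm_sq, he₁, he₂, horth'] at this
    norm_num at this
  have hmn : e₁ - e₂ ≠ 0 := by
    intro h
    have : ⟪e₁ - e₂, e₁ - e₂⟫ = 0 := by rw [h]; simp
    rw [inner_sub_sub_self, horth, real_inner_self_eq_norm_sq,
      real_inner_self_eq_norm_sq, he₁, he₂, horth'] at this
    norm_num at this
  have hio : ⟪e₁ + e₂, e₁ - e₂⟫ = 0 := by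
    rw [inner_sub_right, inner_add_left, inner_add_left, horth, horth',
      real_inner_self_eq_norm_sq, real_inner_self_eq_norm_sq, he₁, he₂]
    ring
  have hio' : ⟪e₁ + e₂, e₂ - e₁⟫ = 0 := by
    rw [show e₂ - e₁ = -(e₁ - e₂) by abel, inner_neg_right, hio, neg_zero]
  have key1 : 2 * f e₁ = max (f e₁) (f e₂) := by
    have h2e : f ((e₁ + e₂) + (e₁ - e₂)) = 2 * f e₁ := by
      rw [show (e₁ + e₂) + (e₁ - e₂) = (2:ℝ) • e₁ by
        rw [two_smul]; abel]
      rw [hhom]; norm_num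
    have := hKL (e₁ + e₂) (e₁ - e₂) hpn hmn
    rw [hio, zero_div, hp, hm, h2e, hmax] at this
    simpa using this
  have key2 : 2 * f e₂ = max (f e₁) (f e₂) := by
    have h2e : f ((e₁ + e₂) + (e₂ - e₁)) = 2 * f e₂ := by
      rw [show (e₁ + e₂) + (e₂ - e₁) = (2:ℝ) • e₂ by
        rw [two_smul]; abel]
      rw [hhom]; norm_num
    have hmn' : e₂ - e₁ ≠ 0 := by
      intro h; exact hmn (by rw [show e₁ - e₂ = -(e₂ - e₁) by abel, h, neg_zero])
    have hm' : f (e₂ - e₁) = max (f e₁) (f e₂) := by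
      rw [show e₂ - e₁ = (-1:ℝ) • (e₁ - e₂) by simp, hhom]
      simpa using hm
    have := hKL (e₁ + e₂) (e₂ - e₁) hpn hmn'
    rw [hio', zero_div, hp, hm', h2e, hmax] at this
    simpa using this
  have heq : f e₁ = f e₂ := by linarith
  have : f e₁ = 0 := by
    rw [heq, max_self] at key2; linarith
  refine ⟨by rw [hp, hm], hp, this, heq ▸ this⟩
end

section
/- Let V be a real inner product space, e₁, e₂ ∈ V orthonormal, and f : V → ℝ absolutely homogeneous of degree 1 with f(e₁) = f(e₂). Suppose there is a function F such that f(u + v) = F(⟨u,u⟩, ⟨u,v⟩, ⟨v,v⟩, f(u), f(v)) for all u, v ∈ V. Define T : ℝ → ℝ by T(φ) = f(cos(φ)e₁ + sin(φ)e₂). Then T(φ) = T(φ + π/2) for all φ ∈ ℝ. -/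
/-!
The quarter turn maps the decomposition `cos φ • e₁ + sin φ • e₂` to `cos φ • e₂ + (-sin φ) • e₁`:
the summands have the same Gram data, and by homogeneity and `f e₁ = f e₂` the same values of `f`,
so the functional equation gives the same value of `f` on both sums.
-/

open scoped RealInnerProductSpace

section GramData

variable {V : Type*} [NormedAddCommGroup V] [InnerProductSpace ℝ V]
  {f : V → ℝ} {F : ℝ → ℝ → ℝ → ℝ → ℝ → ℝ}

theorem apply_add_eq_of_gram_eq (hF : ∀ u v : V, f (u + v) = F ⟪u, u⟫ ⟪u, v⟫ ⟪v, v⟫ (f u) (f v))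
    {x y x' y' : V} (hxx : ⟪x, x⟫ = ⟪x', x'⟫) (hxy : ⟪x, y⟫ = ⟪x', y'⟫)
    (hyy : ⟪y, y⟫ = ⟪y', y'⟫) (hfx : f x = f x') (hfy : f y = f y') :
    f (x + y) = f (x' + y') := by
  rw [hF, hF, hxx, hxy, hyy, hfx, hfy]

theorem apply_smul_add_smul_eq_quarter_turn (hhom : ∀ (l : ℝ) (v : V), f (l • v) = |l| * f v)
    (hF : ∀ u v : V, f (u + v) = F ⟪u, u⟫ ⟪u, v⟫ ⟪v, v⟫ (f u) (f v))
    {u v : V} (hself : ⟪u, u⟫ = ⟪v, v⟫) (horth : ⟪u, v⟫ = 0) (hfuv : f u = f v) (a b : ℝ) :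
    f (a • u + b • v) = f (a • v + (-b) • u) := by
  have horth' : ⟪v, u⟫ = 0 := by rw [real_inner_comm, horth]
  apply apply_add_eq_of_gram_eq hF
  · simp only [real_inner_smul_left, real_inner_smul_right, hself]
  · simp only [real_inner_smul_left, real_inner_smul_right, horth, horth', mul_zero]
  · simp only [real_inner_smul_left, real_inner_smul_right, hself]
    ring
  · rw [hhom, hhom, hfuv]
  · rw [hhom, hhom, abs_neg, hfuv]

end GramData

theorem stmt6 {V : Type*} [NormedAddCommGroup V] [InnerProductSpace ℝ V]
    (e₁ e₂ : V) (he₁ : ‖e₁‖ = 1) (he₂ : ‖e₂‖ = 1) (horth : ⟪e₁, e₂⟫ = 0)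
    (f : V → ℝ)
    (hhom : ∀ (l : ℝ) (v : V), f (l • v) = |l| * f v)
    (heq : f e₁ = f e₂)
    (F : ℝ → ℝ → ℝ → ℝ → ℝ → ℝ)
    (hF : ∀ u v : V, f (u + v) = F ⟪u, u⟫ ⟪u, v⟫ ⟪v, v⟫ (f u) (f v))
    (T : ℝ → ℝ)
    (hT : ∀ φ : ℝ, T φ = f (Real.cos φ • e₁ + Real.sin φ • e₂)) :
    ∀ φ : ℝ, T φ = T (φ + Real.pi / 2) := by
  intro φ
  have hnorm : ⟪e₁, e₁⟫ = ⟪e₂, e₂⟫ := by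
    rw [real_inner_self_eq_norm_sq, real_inner_self_eq_norm_sq, he₁, he₂]
  rw [hT, hT, Real.cos_add_pi_div_two, Real.sin_add_pi_div_two, add_comm (-Real.sin φ • e₁)]
  exact apply_smul_add_smul_eq_quarter_turn hhom hF hnorm horth heq _ _
end

section
/- Let V be a real inner product space of dimension at least 2, and let f : V → ℝ be absolutely homogeneous of degree 1 such that f(u + v) = F(⟨u,u⟩, ⟨u,v⟩, ⟨v,v⟩, f(u), f(v)) for some function F and all u, v ∈ V. Then for any two orthonormal vectors e₁, e₂ ∈ V one has f(e₁) = f(e₂). -/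
open scoped RealInnerProductSpace

theorem stmt8 {V : Type*} [NormedAddCommGroup V] [InnerProductSpace ℝ V]
    (hdim : 2 ≤ Module.rank ℝ V) (f : V → ℝ)
    (hhom : ∀ (l : ℝ) (v : V), f (l • v) = |l| * f v)
    (F : ℝ → ℝ → ℝ → ℝ → ℝ → ℝ)
    (hF : ∀ u v : V, f (u + v) = F ⟪u, u⟫ ⟪u, v⟫ ⟪v, v⟫ (f u) (f v)) :
    ∀ e₁ e₂ : V, ‖e₁‖ = 1 → ‖e₂‖ = 1 → ⟪e₁, e₂⟫ = 0 → f e₁ = f e₂ := by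
  intro e₁ e₂ h1 h2 h12
  set x : V := (2⁻¹ : ℝ) • (e₁ + e₂) with hx
  set y : V := (2⁻¹ : ℝ) • (e₁ - e₂) with hy
  have hxy : x + y = e₁ := by rw [hx, hy]; module
  have hxy' : x + (-y) = e₂ := by rw [hx, hy]; module
  have hy' : f (-y) = f y := by
    have := hhom (-1) y
    simpa using this
  have ho : ⟪x, y⟫ = (0 : ℝ) := by
    rw [hx, hy]
    rw [real_inner_smul_left, real_inner_smul_right, inner_add_left, inner_sub_right,
      inner_sub_right, real_inner_self_eq_norm_sq, real_inner_self_eq_norm_sq, h1, h2,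
      real_inner_comm e₂ e₁]
    ring
  have e1 : f e₁ = F ⟪x, x⟫ ⟪x, y⟫ ⟪y, y⟫ (f x) (f y) := by
    rw [← hxy]; exact hF x y
  have e2 : f e₂ = F ⟪x, x⟫ ⟪x, -y⟫ ⟪-y, -y⟫ (f x) (f (-y)) := by
    rw [← hxy']; exact hF x (-y)
  rw [e1, e2, inner_neg_right, inner_neg_neg, hy', ho, neg_zero]
end

section
/- Fix n ≥ 1 and κ > 0, and let C be a symmetric positive definite n×n real matrix. Suppose g is a function assigning a 'portfolio turnover' to each weight vector x ∈ ℝⁿ via g(x) = f(Σᵢ xᵢ αᵢ), where (α₁,…,αₙ) are vectors in an inner product space with Gram matrix C, f is absolutely homogeneous of degree 1, f(v) = F(Gram data, values of f) for all pairs as in the main theorem, and f(αᵢ)/√(Cᵢᵢ) = κ for all i. Then g(x) = κ·√(xᵀ C x) for every x ∈ ℝⁿ. -/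
open scoped RealInnerProductSpace
open Matrix

/-! Since `f` is even and `f (u + v)` depends only on the inner products of `u, v` and on
`f u, f v`, writing two vectors of equal norm as `u + v` and `u - v` with `u ⟂ v` shows that `f`
is constant on spheres. Absolute homogeneity then forces `f = c • ‖·‖`, and the normalisation
`f (αᵢ) = κ ‖αᵢ‖` gives `c = κ`. Finally `‖∑ xᵢ αᵢ‖² = xᵀ C x` because `C` is the Gram matrix. -/

section

variable {V : Type*} [NormedAddCommGroup V] [InnerProductSpace ℝ V]

lemma apply_eq_of_norm_eq {f : V → ℝ} (hneg : ∀ v, f (-v) = f v)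
    {F : ℝ → ℝ → ℝ → ℝ → ℝ → ℝ}
    (hF : ∀ u v : V, f (u + v) = F ⟪u, u⟫ ⟪u, v⟫ ⟪v, v⟫ (f u) (f v))
    {a b : V} (hab : ‖a‖ = ‖b‖) : f a = f b := by
  set u : V := (2 : ℝ)⁻¹ • (a + b)
  set v : V := (2 : ℝ)⁻¹ • (a - b)
  have huv : ⟪u, v⟫ = 0 := by
    simp only [u, v, real_inner_smul_left, real_inner_smul_right, inner_add_left,
      inner_sub_right, real_inner_self_eq_norm_sq, real_inner_comm b a, hab]
    ring
  have ha : a = u + v := by module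
  have hb : b = u + -v := by module
  rw [ha, hb, hF, hF, inner_neg_right, huv, inner_neg_neg, hneg, neg_zero]

lemma apply_eq_div_norm_mul_norm {f : V → ℝ} (hhom : ∀ (l : ℝ) (v : V), f (l • v) = |l| * f v)
    (hsphere : ∀ a b : V, ‖a‖ = ‖b‖ → f a = f b) {w : V} (hw : w ≠ 0) (v : V) :
    f v = f w / ‖w‖ * ‖v‖ := by
  have hw' : 0 < ‖w‖ := norm_pos_iff.mpr hw
  have hnorm : ‖(‖v‖ / ‖w‖) • w‖ = ‖v‖ := by
    rw [norm_smul, Real.norm_of_nonneg (by positivity), div_mul_cancel₀ _ hw'.ne']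
  rw [hsphere v _ hnorm.symm, hhom, abs_of_nonneg (by positivity)]
  ring

lemma norm_sum_smul_eq_sqrt_dotProduct_mulVec {ι : Type*} [Fintype ι] {α : ι → V}
    {C : Matrix ι ι ℝ} (hGram : ∀ i j, ⟪α i, α j⟫ = C i j) (x : ι → ℝ) :
    ‖∑ i, x i • α i‖ = Real.sqrt (x ⬝ᵥ C *ᵥ x) := by
  have hC : C = gram ℝ α := Matrix.ext fun i j => (hGram i j).symm
  rw [hC, ← star_trivial x, star_dotProduct_gram_mulVec, star_trivial,
    real_inner_self_eq_norm_sq, Real.sqrt_sq (norm_nonneg _)]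

end

theorem stmt9_general {V : Type*} [NormedAddCommGroup V] [InnerProductSpace ℝ V]
    {n : ℕ} (hn : 1 ≤ n) (κ : ℝ)
    (C : Matrix (Fin n) (Fin n) ℝ) (hpd : C.PosDef)
    (α : Fin n → V) (hGram : ∀ i j, ⟪α i, α j⟫ = C i j)
    (f : V → ℝ)
    (hhom : ∀ (l : ℝ) (v : V), f (l • v) = |l| * f v)
    (F : ℝ → ℝ → ℝ → ℝ → ℝ → ℝ)
    (hF : ∀ u v : V, f (u + v) = F ⟪u, u⟫ ⟪u, v⟫ ⟪v, v⟫ (f u) (f v))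
    (hκeq : ∀ i, f (α i) / Real.sqrt (C i i) = κ)
    (g : (Fin n → ℝ) → ℝ)
    (hg : ∀ x : Fin n → ℝ, g x = f (∑ i, x i • α i)) :
    ∀ x : Fin n → ℝ, g x = κ * Real.sqrt (x ⬝ᵥ C.mulVec x) := by
  intro x
  let i₀ : Fin n := ⟨0, hn⟩
  have hnorm : ‖α i₀‖ = Real.sqrt (C i₀ i₀) := by
    rw [← hGram, real_inner_self_eq_norm_sq, Real.sqrt_sq (norm_nonneg _)]
  have hα : α i₀ ≠ 0 := by
    rw [← norm_pos_iff, hnorm]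
    exact Real.sqrt_pos.mpr hpd.diag_pos
  have hsphere : ∀ a b : V, ‖a‖ = ‖b‖ → f a = f b :=
    fun _ _ => apply_eq_of_norm_eq (fun v => by simpa using hhom (-1) v) hF
  rw [hg, apply_eq_div_norm_mul_norm hhom hsphere hα, hnorm, hκeq,
    norm_sum_smul_eq_sqrt_dotProduct_mulVec hGram]

theorem stmt9 {V : Type*} [NormedAddCommGroup V] [InnerProductSpace ℝ V]
    {n : ℕ} (hn : 1 ≤ n) (κ : ℝ) (hκ : 0 < κ)
    (C : Matrix (Fin n) (Fin n) ℝ) (hsymm : C.IsSymm) (hpd : C.PosDef)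
    (α : Fin n → V) (hGram : ∀ i j, ⟪α i, α j⟫ = C i j)
    (f : V → ℝ)
    (hhom : ∀ (l : ℝ) (v : V), f (l • v) = |l| * f v)
    (F : ℝ → ℝ → ℝ → ℝ → ℝ → ℝ)
    (hF : ∀ u v : V, f (u + v) = F ⟪u, u⟫ ⟪u, v⟫ ⟪v, v⟫ (f u) (f v))
    (hκeq : ∀ i, f (α i) / Real.sqrt (C i i) = κ)
    (g : (Fin n → ℝ) → ℝ)
    (hg : ∀ x : Fin n → ℝ, g x = f (∑ i, x i • α i)) :
    ∀ x : Fin n → ℝ, g x = κ * Real.sqrt (x ⬝ᵥ C.mulVec x) :=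
  stmt9_general hn κ C hpd α hGram f hhom F hF hκeq g hg
end

section
/- Let V be a real inner product space of dimension at least 2, and let f : V → ℝ be absolutely homogeneous of degree 1 such that f(u + v) = F(⟨u,u⟩, ⟨u,v⟩, ⟨v,v⟩, f(u), f(v)) for some function F and all u, v ∈ V. Then for any two nonzero vectors ξ₁, ξ₂ ∈ V one has f(ξ₁)/‖ξ₁‖ = f(ξ₂)/‖ξ₂‖. -/
open scoped RealInnerProductSpace

theorem stmt13 {V : Type*} [NormedAddCommGroup V] [InnerProductSpace ℝ V]
    (hdim : 2 ≤ Module.rank ℝ V) (f : V → ℝ)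
    (hhom : ∀ (l : ℝ) (v : V), f (l • v) = |l| * f v)
    (F : ℝ → ℝ → ℝ → ℝ → ℝ → ℝ)
    (hF : ∀ u v : V, f (u + v) = F ⟪u, u⟫ ⟪u, v⟫ ⟪v, v⟫ (f u) (f v)) :
    ∀ ξ₁ ξ₂ : V, ξ₁ ≠ 0 → ξ₂ ≠ 0 → f ξ₁ / ‖ξ₁‖ = f ξ₂ / ‖ξ₂‖ := by
  have key : ∀ u v : V, ‖u‖ = ‖v‖ → f u = f v := by
    intro u v huv
    set p : V := ((1:ℝ)/2) • (u + v) with hp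
    set q : V := ((1:ℝ)/2) • (u - v) with hq
    have hfq : f (-q) = f q := by
      have := hhom (-1) q
      simpa using this
    have hinner : ⟪p, q⟫ = 0 := by
      have h : ⟪u + v, u - v⟫ = 0 := by
        rw [inner_sub_right, inner_add_left, inner_add_left]
        have hc := real_inner_comm u v
        have hu : ⟪u, u⟫ = ‖u‖ ^ 2 := real_inner_self_eq_norm_sq u
        have hv : ⟪v, v⟫ = ‖v‖ ^ 2 := real_inner_self_eq_norm_sq v
        rw [hu, hv, huv, hc]; ring
      rw [hp, hq, real_inner_smul_left, real_inner_smul_right, h]; ring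
    have h1 := hF p q
    have h2 := hF p (-q)
    have e1 : p + q = u := by rw [hp, hq]; module
    have e2 : p + -q = v := by rw [hp, hq]; module
    rw [e1] at h1
    rw [e2, inner_neg_neg, inner_neg_right, hinner, hfq] at h2
    rw [hinner] at h1
    simp only [neg_zero] at h2
    rw [h1, h2]
  intro ξ₁ ξ₂ h1 h2
  have hn : ‖(‖ξ₂‖ • ξ₁ : V)‖ = ‖(‖ξ₁‖ • ξ₂ : V)‖ := by
    rw [norm_smul, norm_smul, norm_norm, norm_norm, mul_comm]
  have := key (‖ξ₂‖ • ξ₁) (‖ξ₁‖ • ξ₂) hn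
  rw [hhom, hhom, abs_of_nonneg (norm_nonneg _), abs_of_nonneg (norm_nonneg _)] at this
  have n1 : ‖ξ₁‖ ≠ 0 := norm_ne_zero_iff.mpr h1
  have n2 : ‖ξ₂‖ ≠ 0 := norm_ne_zero_iff.mpr h2
  field_simp
  linarith [this]
end
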